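/- arXiv:1903.04335 — 2 statements merged into one kernel-verified Lean document; each statement's English description precedes it below -/
import Mathlib

section
/- Let K = ⋃_{ℓ=1}^L [a_ℓ, b_ℓ] ⊆ [−1,1] with −1 = a_1 < b_1 < a_2 < ⋯ < a_L < b_L = 1, let w be continuous and strictly positive on K, and let P be a real polynomial of degree at most N. Then for every d ≥ N one has sslash P sslash_d ≤ sslash P sslash_{d+1} ≤ ‖P/w‖_{L1(K)}. -/
open MeasureTheory Filter Polynomial

/-- The `(d+1) × (d+1)` symmetric Toeplitz matrix built from a vector `y ∈ ℝ^{d+1}`,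
with entries `y_{|i−j|}`. -/
noncomputable def toepFin (d : ℕ) (y : Fin (d + 1) → ℝ) :
    Matrix (Fin (d + 1)) (Fin (d + 1)) ℝ :=
  fun i j => y ⟨(((i : ℕ) : ℤ) - ((j : ℕ) : ℤ)).natAbs, by omega⟩

/-- The transplantation `P_ℓ(x) = P(((bℓ−aℓ)x + aℓ + bℓ)/2)` of a polynomial
from `[aℓ, bℓ]` to `[-1, 1]`. -/
noncomputable def transplant (aℓ bℓ : ℝ) (P : Polynomial ℝ) : Polynomial ℝ :=
  P.comp (Polynomial.C ((bℓ - aℓ) / 2) * Polynomial.X + Polynomial.C ((aℓ + bℓ) / 2))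

/-- The entries `J^ℓ_{k,n} = ∫_0^π cos(kθ) sin((n+1)θ) / w_ℓ(cos θ) dθ`, where
`w_ℓ(x) = w(((bℓ−aℓ)x + aℓ + bℓ)/2)` is the transplantation of the weight `w`. -/
noncomputable def Jent (aℓ bℓ : ℝ) (w : ℝ → ℝ) (k n : ℕ) : ℝ :=
  ∫ θ in (0:ℝ)..Real.pi,
    Real.cos (k * θ) * Real.sin ((n + 1) * θ) /
      w (((bℓ - aℓ) * Real.cos θ + aℓ + bℓ) / 2)

/-- The weighted `L1` norm `‖P/w‖_{L1(K)} = ∑_ℓ ∫_{a_ℓ}^{b_ℓ} |P(t)|/w(t) dt`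
on `K = ⋃_{ℓ<L} [a ℓ, b ℓ]`. -/
noncomputable def L1K (L : ℕ) (a b : ℕ → ℝ) (w : ℝ → ℝ) (P : Polynomial ℝ) : ℝ :=
  ∑ ℓ ∈ Finset.range L, ∫ t in (a ℓ)..(b ℓ), |P.eval t| / w t

/-- The ersatz norm `⫽P⫽_d`: the infimum of
`∑_ℓ ((b_ℓ−a_ℓ)/2)(y^{ℓ,+}_0 + y^{ℓ,−}_0)` over vectors `y^{ℓ,±} ∈ ℝ^{d+1}` with
`y^{ℓ,+} − y^{ℓ,−} = J^{ℓ,d} W^ℓ p` and `Toep_d(y^{ℓ,±}) ⪰ 0`, where `q ℓ = W^ℓ p` is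
the vector of second-kind Chebyshev coefficients of the transplantation `P_ℓ`. -/
noncomputable def ersatz (L N d : ℕ) (a b : ℕ → ℝ) (w : ℝ → ℝ) (P : Polynomial ℝ) : ℝ :=
  sInf { s : ℝ |
    ∃ q : ℕ → Fin (N + 1) → ℝ,
      (∀ ℓ < L, transplant (a ℓ) (b ℓ) P
          = ∑ n : Fin (N + 1), Polynomial.C (q ℓ n) * Polynomial.Chebyshev.U ℝ ((n : ℕ) : ℤ)) ∧
      ∃ yp ym : ℕ → Fin (d + 1) → ℝ,
        (∀ ℓ < L, ∀ k : Fin (d + 1),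
            yp ℓ k - ym ℓ k
              = ∑ n : Fin (N + 1), Jent (a ℓ) (b ℓ) w (k : ℕ) (n : ℕ) * q ℓ n) ∧
        (∀ ℓ < L, (toepFin d (yp ℓ)).PosSemidef ∧ (toepFin d (ym ℓ)).PosSemidef) ∧
        s = ∑ ℓ ∈ Finset.range L, ((b ℓ - a ℓ) / 2) * (yp ℓ 0 + ym ℓ 0) }

/-!
Substituting `x = cos θ` on each interval turns `∫_{a_ℓ}^{b_ℓ} |P|/w` into `(b_ℓ - a_ℓ)/2` times
`∫_0^π |f_ℓ|`, where `f_ℓ(θ) = P_ℓ(cos θ) sin θ / w_ℓ(cos θ)`; since `U_n(cos θ) sin θ = sin((n+1)θ)`,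
the cosine moments of `f_ℓ` are exactly `J^{ℓ,d} W^ℓ p`. Split `f_ℓ = f_ℓ⁺ - f_ℓ⁻`: the Toeplitz
matrix of cosine moments of a nonnegative function `φ` is positive semidefinite, its quadratic form
being `∫ |∑ x_k e^{ikθ}|² φ`, and the zeroth moments of `f_ℓ^±` add up to `∫ |f_ℓ|`. Hence
`‖P/w‖_{L1(K)}` is a feasible value of the program for every `d`. Truncating a feasible point of
size `d + 1` to size `d` keeps it feasible (principal submatrices of PSD matrices are PSD) and
keeps its value, so the feasible values only shrink as `d` grows.
-/

open Real Set

namespace Polynomial.Chebyshev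

noncomputable def chebyshevUsequence (R : Type*) [CommRing R] [IsDomain R] [NeZero (2 : R)] :
    Polynomial.Sequence R where
  elems' n := U R n
  degree_eq' n := degree_U_natCast R n

theorem exists_eq_sum_C_mul_U {R : Type*} [Field R] [NeZero (2 : R)] {N : ℕ} {P : R[X]}
    (hP : P.natDegree ≤ N) :
    ∃ q : Fin (N + 1) → R, P = ∑ n : Fin (N + 1), Polynomial.C (q n) * U R n := by
  have hspan := (chebyshevUsequence R).span_degreeLE (m := N) fun i _ => by
    simp [chebyshevUsequence, two_ne_zero]
  have hrange : chebyshevUsequence R '' Iic N = range fun n : Fin (N + 1) => U R n := by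
    ext P
    simp only [mem_image, mem_Iic, mem_range]
    exact ⟨fun ⟨n, hn, h⟩ => ⟨⟨n, by omega⟩, h⟩, fun ⟨n, h⟩ => ⟨n, by omega, h⟩⟩
  have hmem : P ∈ degreeLE R N := mem_degreeLE.2 (degree_le_of_natDegree_le hP)
  rw [← hspan, hrange, Submodule.mem_span_range_iff_exists_fun] at hmem
  obtain ⟨q, hq⟩ := hmem
  exact ⟨q, by simp only [← hq, smul_eq_C_mul]⟩

end Polynomial.Chebyshev

theorem sum_sum_mul_cos_sub_mul {ι : Type*} [Fintype ι] (x t : ι → ℝ) (θ : ℝ) :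
    ∑ i, ∑ j, x i * x j * cos ((t i - t j) * θ)
      = (∑ i, x i * cos (t i * θ)) ^ 2 + (∑ i, x i * sin (t i * θ)) ^ 2 := by
  simp only [sq, Finset.sum_mul_sum, ← Finset.sum_add_distrib, sub_mul, cos_sub]
  refine Finset.sum_congr rfl fun i _ => Finset.sum_congr rfl fun j _ => ?_
  ring

theorem toepFin_submatrix_castSucc (d : ℕ) (y : Fin (d + 2) → ℝ) :
    (toepFin (d + 1) y).submatrix Fin.castSucc Fin.castSucc = toepFin d (y ∘ Fin.castSucc) :=
  rfl

theorem Matrix.PosSemidef.toepFin_zero_nonneg {d : ℕ} {y : Fin (d + 1) → ℝ}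
    (h : (toepFin d y).PosSemidef) : 0 ≤ y 0 :=
  h.diag_nonneg (i := 0)

noncomputable def cosMoment (φ : ℝ → ℝ) (k : ℕ) : ℝ :=
  ∫ θ in (0 : ℝ)..π, cos (k * θ) * φ θ

theorem toepFin_cosMoment_apply (d : ℕ) (φ : ℝ → ℝ) (i j : Fin (d + 1)) :
    toepFin d (fun k => cosMoment φ k) i j
      = ∫ θ in (0 : ℝ)..π, cos (((i : ℝ) - j) * θ) * φ θ := by
  have hcos : ∀ θ, cos ((((i : ℤ) - j).natAbs : ℝ) * θ) = cos (((i : ℝ) - j) * θ) := by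
    intro θ
    rw [Nat.cast_natAbs, Int.cast_abs, Int.cast_sub, Int.cast_natCast, Int.cast_natCast]
    rcases abs_choice ((i : ℝ) - j) with h | h <;> rw [h]
    rw [neg_mul, cos_neg]
  simp only [toepFin, cosMoment, hcos]

theorem posSemidef_toepFin_cosMoment (d : ℕ) {φ : ℝ → ℝ} (hφ : Continuous φ)
    (hφ0 : ∀ θ ∈ Icc 0 π, 0 ≤ φ θ) : (toepFin d (fun k => cosMoment φ k)).PosSemidef := by
  refine Matrix.PosSemidef.of_dotProduct_mulVec_nonneg ?_ fun x => ?_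
  · ext i j
    simp only [Matrix.conjTranspose_apply, star_trivial, toepFin_cosMoment_apply]
    simp only [← neg_sub (j : ℝ), neg_mul, cos_neg]
  · have hintegrable : ∀ i j : Fin (d + 1), IntervalIntegrable
        (fun θ => x i * x j * cos (((i : ℝ) - j) * θ) * φ θ) MeasureTheory.volume 0 π :=
      fun i j => (by fun_prop : Continuous _).intervalIntegrable _ _
    have hform : star x ⬝ᵥ (toepFin d (fun k => cosMoment φ k)).mulVec x
        = ∫ θ in (0 : ℝ)..π, (∑ i, ∑ j, x i * x j * cos (((i : ℝ) - j) * θ)) * φ θ := by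
      simp only [Finset.sum_mul]
      rw [intervalIntegral.integral_finsetSum fun i _ =>
        (by fun_prop : Continuous _).intervalIntegrable _ _]
      simp only [dotProduct, Matrix.mulVec, star_trivial, Finset.mul_sum]
      refine Finset.sum_congr rfl fun i _ => ?_
      rw [intervalIntegral.integral_finsetSum fun j _ => hintegrable i j]
      refine Finset.sum_congr rfl fun j _ => ?_
      rw [toepFin_cosMoment_apply, ← intervalIntegral.integral_mul_const,
        ← intervalIntegral.integral_const_mul]
      exact intervalIntegral.integral_congr fun θ _ => by ring
    rw [hform]
    refine intervalIntegral.integral_nonneg pi_pos.le fun θ hθ => ?_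
    rw [sum_sum_mul_cos_sub_mul]
    exact mul_nonneg (by positivity) (hφ0 θ hθ)

theorem cosMoment_zero (φ : ℝ → ℝ) : cosMoment φ 0 = ∫ θ in (0 : ℝ)..π, φ θ := by
  simp [cosMoment]

theorem cosMoment_posPart_sub_negPart {f : ℝ → ℝ} (hf : Continuous f) (k : ℕ) :
    cosMoment f⁺ k - cosMoment f⁻ k = cosMoment f k := by
  have hpos : Continuous f⁺ := hf.max continuous_const
  have hneg : Continuous f⁻ := hf.neg.max continuous_const
  rw [cosMoment, cosMoment, ← intervalIntegral.integral_sub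
    ((by fun_prop : Continuous _).intervalIntegrable _ _)
    ((by fun_prop : Continuous _).intervalIntegrable _ _)]
  refine intervalIntegral.integral_congr fun θ _ => ?_
  simp only [← mul_sub, Pi.posPart_apply, Pi.negPart_apply, posPart_sub_negPart]

theorem cosMoment_posPart_add_negPart_zero {f : ℝ → ℝ} (hf : Continuous f) :
    cosMoment f⁺ 0 + cosMoment f⁻ 0 = ∫ θ in (0 : ℝ)..π, |f θ| := by
  have hpos : Continuous f⁺ := hf.max continuous_const
  have hneg : Continuous f⁻ := hf.neg.max continuous_const
  rw [cosMoment_zero, cosMoment_zero, ← intervalIntegral.integral_add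
    (hpos.intervalIntegrable _ _) (hneg.intervalIntegrable _ _)]
  refine intervalIntegral.integral_congr fun θ _ => ?_
  simp only [Pi.posPart_apply, Pi.negPart_apply, posPart_add_negPart]

theorem integral_comp_cos_mul_sin {g : ℝ → ℝ} (hg : ContinuousOn g (Icc (-1) 1)) :
    ∫ θ in (0 : ℝ)..π, g (cos θ) * sin θ = ∫ x in (-1 : ℝ)..1, g x := by
  have h := intervalIntegral.integral_comp_mul_deriv' (a := 0) (b := π) (f' := fun θ => -sin θ)
    (fun θ _ => hasDerivAt_cos θ) (by fun_prop) (hg.mono ?_)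
  · simp only [Function.comp_def, mul_neg, intervalIntegral.integral_neg, cos_zero, cos_pi] at h
    rw [intervalIntegral.integral_symm 1, ← h, neg_neg]
  · rintro _ ⟨θ, _, rfl⟩
    exact ⟨neg_one_le_cos θ, cos_le_one θ⟩

theorem natDegree_transplant_le (a b : ℝ) (P : ℝ[X]) :
    (transplant a b P).natDegree ≤ P.natDegree := by
  refine natDegree_comp_le.trans ?_
  calc _ ≤ P.natDegree * 1 := Nat.mul_le_mul_left _ natDegree_linear_le
    _ = P.natDegree := mul_one _

section Transplant

variable {a b : ℝ} {w : ℝ → ℝ}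

theorem affine_mem_Icc (hab : a ≤ b) {x : ℝ} (hx : x ∈ Icc (-1) 1) :
    ((b - a) * x + a + b) / 2 ∈ Icc a b := by
  constructor <;> nlinarith [hx.1, hx.2]

theorem affine_cos_mem_Icc (hab : a ≤ b) (θ : ℝ) : ((b - a) * cos θ + a + b) / 2 ∈ Icc a b :=
  affine_mem_Icc hab ⟨neg_one_le_cos θ, cos_le_one θ⟩

variable (a b w) in
noncomputable def thetaDensity (P : ℝ[X]) (θ : ℝ) : ℝ :=
  (transplant a b P).eval (cos θ) * sin θ / w (((b - a) * cos θ + a + b) / 2)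

variable (hab : a ≤ b) (hw : ContinuousOn w (Icc a b)) (hwpos : ∀ x ∈ Icc a b, 0 < w x)
include hab hw

theorem continuous_weight_cos : Continuous fun θ => w (((b - a) * cos θ + a + b) / 2) :=
  hw.comp_continuous (by fun_prop) (affine_cos_mem_Icc hab)

include hwpos

theorem continuous_thetaDensity (P : ℝ[X]) : Continuous (thetaDensity a b w P) :=
  (by fun_prop : Continuous fun θ => (transplant a b P).eval (cos θ) * sin θ).div
    (continuous_weight_cos hab hw) fun θ => (hwpos _ (affine_cos_mem_Icc hab θ)).ne'

theorem cosMoment_thetaDensity {P : ℝ[X]} {N : ℕ} {q : Fin (N + 1) → ℝ}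
    (hq : transplant a b P = ∑ n : Fin (N + 1), C (q n) * Chebyshev.U ℝ n) (k : ℕ) :
    cosMoment (thetaDensity a b w P) k = ∑ n : Fin (N + 1), Jent a b w k n * q n := by
  have hpt : ∀ θ, cos (k * θ) * thetaDensity a b w P θ = ∑ n : Fin (N + 1),
      cos (k * θ) * sin (((n : ℕ) + 1 : ℝ) * θ) / w (((b - a) * cos θ + a + b) / 2) * q n := by
    intro θ
    simp only [thetaDensity, hq, eval_finsetSum, eval_mul, eval_C, Finset.sum_mul,
      Finset.sum_div, Finset.mul_sum]
    refine Finset.sum_congr rfl fun n _ => ?_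
    rw [mul_assoc (q n), Chebyshev.U_real_cos]
    push_cast
    ring
  rw [cosMoment, intervalIntegral.integral_congr fun θ _ => hpt θ,
    intervalIntegral.integral_finsetSum fun n _ => ?_]
  · simp only [intervalIntegral.integral_mul_const, Jent]
  · exact (((by fun_prop : Continuous fun θ => cos (k * θ) * sin (((n : ℕ) + 1 : ℝ) * θ)).div
      (continuous_weight_cos hab hw) fun θ => (hwpos _ (affine_cos_mem_Icc hab θ)).ne').mul
      continuous_const).intervalIntegrable _ _

theorem integral_abs_thetaDensity (P : ℝ[X]) :
    (b - a) / 2 * ∫ θ in (0 : ℝ)..π, |thetaDensity a b w P θ| = ∫ t in a..b, |P.eval t| / w t := by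
  rcases hab.eq_or_lt with rfl | hlt
  · simp
  have hhalf : (b - a) / 2 ≠ 0 := (half_pos (sub_pos.2 hlt)).ne'
  set g : ℝ → ℝ := fun x => |(transplant a b P).eval x| / w (((b - a) * x + a + b) / 2)
  have habs : ∀ θ ∈ uIcc 0 π, |thetaDensity a b w P θ| = g (cos θ) * sin θ := by
    intro θ hθ
    rw [uIcc_of_le pi_pos.le] at hθ
    rw [thetaDensity, abs_div, abs_mul, abs_of_nonneg (sin_nonneg_of_nonneg_of_le_pi hθ.1 hθ.2),
      abs_of_pos (hwpos _ (affine_cos_mem_Icc hab θ))]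
    ring
  have hg : ContinuousOn g (Icc (-1) 1) :=
    (by fun_prop : Continuous fun x => |(transplant a b P).eval x|).continuousOn.div
      (hw.comp (by fun_prop) fun x hx => affine_mem_Icc hab hx)
      fun x hx => (hwpos _ (affine_mem_Icc hab hx)).ne'
  have hrescale : ∫ x in (-1 : ℝ)..1, g x
      = ((b - a) / 2)⁻¹ * ∫ t in a..b, |P.eval t| / w t := by
    have haffine : ∀ x, ((b - a) * x + a + b) / 2 = (b - a) / 2 * x + (a + b) / 2 := fun x => by
      ring
    have hbounds : (b - a) / 2 * -1 + (a + b) / 2 = a ∧ (b - a) / 2 * 1 + (a + b) / 2 = b := by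
      constructor <;> ring
    simp only [g, haffine, transplant, eval_comp, eval_add, eval_mul, eval_C, eval_X]
    rw [intervalIntegral.integral_comp_mul_add (fun t => |P.eval t| / w t) hhalf, hbounds.1,
      hbounds.2, smul_eq_mul]
  rw [intervalIntegral.integral_congr habs, integral_comp_cos_mul_sin hg, hrescale,
    mul_inv_cancel_left₀ hhalf]

end Transplant

def ersatzValues (L N d : ℕ) (a b : ℕ → ℝ) (w : ℝ → ℝ) (P : Polynomial ℝ) : Set ℝ :=
  { s : ℝ |
    ∃ q : ℕ → Fin (N + 1) → ℝ,
      (∀ ℓ < L, transplant (a ℓ) (b ℓ) P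
          = ∑ n : Fin (N + 1), Polynomial.C (q ℓ n) * Polynomial.Chebyshev.U ℝ ((n : ℕ) : ℤ)) ∧
      ∃ yp ym : ℕ → Fin (d + 1) → ℝ,
        (∀ ℓ < L, ∀ k : Fin (d + 1),
            yp ℓ k - ym ℓ k
              = ∑ n : Fin (N + 1), Jent (a ℓ) (b ℓ) w (k : ℕ) (n : ℕ) * q ℓ n) ∧
        (∀ ℓ < L, (toepFin d (yp ℓ)).PosSemidef ∧ (toepFin d (ym ℓ)).PosSemidef) ∧
        s = ∑ ℓ ∈ Finset.range L, ((b ℓ - a ℓ) / 2) * (yp ℓ 0 + ym ℓ 0) }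

section ErsatzValues

variable {L N : ℕ} {a b : ℕ → ℝ} {w : ℝ → ℝ} {P : ℝ[X]}

theorem ersatz_eq_sInf_ersatzValues (d : ℕ) :
    ersatz L N d a b w P = sInf (ersatzValues L N d a b w P) :=
  rfl

theorem bddBelow_ersatzValues (hab : ∀ ℓ < L, a ℓ ≤ b ℓ) (d : ℕ) :
    BddBelow (ersatzValues L N d a b w P) := by
  refine ⟨0, ?_⟩
  rintro _ ⟨q, -, yp, ym, -, hpsd, rfl⟩
  refine Finset.sum_nonneg fun ℓ hℓ => ?_
  rw [Finset.mem_range] at hℓ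
  have hp := (hpsd ℓ hℓ).1.toepFin_zero_nonneg
  have hm := (hpsd ℓ hℓ).2.toepFin_zero_nonneg
  exact mul_nonneg (by linarith [hab ℓ hℓ]) (add_nonneg hp hm)

theorem ersatzValues_succ_subset (d : ℕ) :
    ersatzValues L N (d + 1) a b w P ⊆ ersatzValues L N d a b w P := by
  rintro _ ⟨q, hq, yp, ym, hdiff, hpsd, rfl⟩
  refine ⟨q, hq, fun ℓ => yp ℓ ∘ Fin.castSucc, fun ℓ => ym ℓ ∘ Fin.castSucc,
    fun ℓ hℓ k => hdiff ℓ hℓ k.castSucc, fun ℓ hℓ => ?_, rfl⟩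
  rw [← toepFin_submatrix_castSucc, ← toepFin_submatrix_castSucc]
  exact ⟨(hpsd ℓ hℓ).1.submatrix _, (hpsd ℓ hℓ).2.submatrix _⟩

theorem L1K_mem_ersatzValues (hab : ∀ ℓ < L, a ℓ ≤ b ℓ)
    (hw : ∀ ℓ < L, ContinuousOn w (Icc (a ℓ) (b ℓ)))
    (hwpos : ∀ ℓ < L, ∀ x ∈ Icc (a ℓ) (b ℓ), 0 < w x) (hP : P.natDegree ≤ N) (d : ℕ) :
    L1K L a b w P ∈ ersatzValues L N d a b w P := by
  choose q hq using fun ℓ =>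
    Chebyshev.exists_eq_sum_C_mul_U ((natDegree_transplant_le (a ℓ) (b ℓ) P).trans hP)
  have hf : ∀ ℓ < L, Continuous (thetaDensity (a ℓ) (b ℓ) w P) := fun ℓ hℓ =>
    continuous_thetaDensity (hab ℓ hℓ) (hw ℓ hℓ) (hwpos ℓ hℓ) P
  refine ⟨q, fun ℓ _ => hq ℓ, fun ℓ k => cosMoment (thetaDensity (a ℓ) (b ℓ) w P)⁺ k,
    fun ℓ k => cosMoment (thetaDensity (a ℓ) (b ℓ) w P)⁻ k,
    fun ℓ hℓ k => ?_, fun ℓ hℓ => ?_, ?_⟩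
  · rw [cosMoment_posPart_sub_negPart (hf ℓ hℓ),
      cosMoment_thetaDensity (hab ℓ hℓ) (hw ℓ hℓ) (hwpos ℓ hℓ) (hq ℓ)]
  · exact ⟨posSemidef_toepFin_cosMoment d ((hf ℓ hℓ).max continuous_const)
      fun θ _ => le_max_right _ _, posSemidef_toepFin_cosMoment d
      ((hf ℓ hℓ).neg.max continuous_const) fun θ _ => le_max_right _ _⟩
  · refine Finset.sum_congr rfl fun ℓ hℓ => ?_
    rw [Finset.mem_range] at hℓ
    dsimp only
    rw [Fin.val_zero, cosMoment_posPart_add_negPart_zero (hf ℓ hℓ),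
      integral_abs_thetaDensity (hab ℓ hℓ) (hw ℓ hℓ) (hwpos ℓ hℓ)]

end ErsatzValues

theorem ersatz_monotone_le_L1_general
    (L : ℕ) (a b : ℕ → ℝ)
    (hab : ∀ ℓ < L, a ℓ < b ℓ)
    (w : ℝ → ℝ)
    (hw : ContinuousOn w (⋃ ℓ ∈ Finset.range L, Set.Icc (a ℓ) (b ℓ)))
    (hwpos : ∀ x ∈ ⋃ ℓ ∈ Finset.range L, Set.Icc (a ℓ) (b ℓ), 0 < w x)
    (N d : ℕ)
    (P : Polynomial ℝ) (hP : P.natDegree ≤ N) :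
    ersatz L N d a b w P ≤ ersatz L N (d + 1) a b w P ∧
    ersatz L N (d + 1) a b w P ≤ L1K L a b w P := by
  have hsub : ∀ ℓ < L, Icc (a ℓ) (b ℓ) ⊆ ⋃ ℓ ∈ Finset.range L, Icc (a ℓ) (b ℓ) :=
    fun ℓ hℓ _ hx => mem_biUnion (Finset.mem_range.2 hℓ) hx
  have hab' : ∀ ℓ < L, a ℓ ≤ b ℓ := fun ℓ hℓ => (hab ℓ hℓ).le
  have hmem := L1K_mem_ersatzValues hab' (fun ℓ hℓ => hw.mono (hsub ℓ hℓ))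
    (fun ℓ hℓ x hx => hwpos x (hsub ℓ hℓ hx)) hP (d + 1)
  simp only [ersatz_eq_sInf_ersatzValues]
  exact ⟨csInf_le_csInf (bddBelow_ersatzValues hab' d) ⟨_, hmem⟩ (ersatzValues_succ_subset d),
    csInf_le (bddBelow_ersatzValues hab' (d + 1)) hmem⟩

/-- For `d ≥ N` and `P` of degree at most `N`: `⫽P⫽_d ≤ ⫽P⫽_{d+1} ≤ ‖P/w‖_{L1(K)}`. -/
theorem ersatz_monotone_le_L1
    (L : ℕ) (hL : 0 < L) (a b : ℕ → ℝ)
    (ha0 : a 0 = -1) (hbL : b (L - 1) = 1)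
    (hab : ∀ ℓ < L, a ℓ < b ℓ)
    (hgap : ∀ ℓ, ℓ + 1 < L → b ℓ < a (ℓ + 1))
    (w : ℝ → ℝ)
    (hw : ContinuousOn w (⋃ ℓ ∈ Finset.range L, Set.Icc (a ℓ) (b ℓ)))
    (hwpos : ∀ x ∈ ⋃ ℓ ∈ Finset.range L, Set.Icc (a ℓ) (b ℓ), 0 < w x)
    (N d : ℕ) (hd : N ≤ d)
    (P : Polynomial ℝ) (hP : P.natDegree ≤ N) :
    ersatz L N d a b w P ≤ ersatz L N (d + 1) a b w P ∧
    ersatz L N (d + 1) a b w P ≤ L1K L a b w P :=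
  ersatz_monotone_le_L1_general L a b hab w hw hwpos N d P hP
end

section
/- Let v be a continuous, strictly positive function on [−1, 1], let N ≥ 0 and d ≥ N, and let J ∈ ℝ^{(d+1)×(N+1)} be the matrix with entries J_{k,n} = ∫_0^π cos(kθ)·sin((n+1)θ)/v(cos θ) dθ for 0 ≤ k ≤ d and 0 ≤ n ≤ N. Then J is injective, i.e. J q = 0 for q ∈ ℝ^{N+1} implies q = 0. -/
open MeasureTheory Real Set

/-!
Write `g θ = ∑ₙ qₙ sin((n+1)θ)` and `w θ = v (cos θ)`. Since `sin((n+1)θ) = Uₙ(cos θ) sin θ`,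
`g = G · sin` for a cosine polynomial `G` of degree `≤ N ≤ d`. If `J q = 0`, then `g / w` is
orthogonal on `[0, π]` to every `cos(kθ)` with `k ≤ d`, hence to `G`; so the continuous,
nonnegative function `G² sin / w` has integral zero and vanishes, forcing `g = 0` on `(0, π]`.
Orthogonality of the sines on `[0, π]` then gives `q = 0`.
-/

lemma integral_cos_int_mul_eq_zero {k : ℤ} (hk : k ≠ 0) :
    ∫ θ in (0 : ℝ)..π, cos (k * θ) = 0 := by
  rw [intervalIntegral.integral_comp_mul_left cos (Int.cast_ne_zero.2 hk)]
  simp [integral_cos, sin_int_mul_pi]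

lemma integral_sin_mul_sin (m n : ℕ) :
    ∫ θ in (0 : ℝ)..π, sin ((m + 1) * θ) * sin ((n + 1) * θ) = if m = n then π / 2 else 0 := by
  have product_to_sum : ∀ θ : ℝ, sin ((m + 1) * θ) * sin ((n + 1) * θ)
      = (cos (((m - n : ℤ) : ℝ) * θ) - cos (((m + n + 2 : ℤ) : ℝ) * θ)) / 2 := by
    intro θ
    have := two_mul_sin_mul_sin ((m + 1) * θ) ((n + 1) * θ)
    push_cast
    rw [show ((m : ℝ) - n) * θ = (m + 1) * θ - (n + 1) * θ by ring,
      show ((m : ℝ) + n + 2) * θ = (m + 1) * θ + (n + 1) * θ by ring]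
    linarith
  simp_rw [product_to_sum]
  have hsum : (m + n + 2 : ℤ) ≠ 0 := by omega
  rw [intervalIntegral.integral_div, intervalIntegral.integral_sub
    (Continuous.intervalIntegrable (by fun_prop) _ _)
    (Continuous.intervalIntegrable (by fun_prop) _ _),
    integral_cos_int_mul_eq_zero hsum]
  split_ifs with h
  · simp [h]
  · rw [integral_cos_int_mul_eq_zero (sub_ne_zero.2 (Int.ofNat_inj.not.2 h))]
    simp

lemma integral_sin_mul_sum_sin {N : ℕ} (q : Fin N → ℝ) (m : Fin N) :
    ∫ θ in (0 : ℝ)..π, sin (((m : ℕ) + 1) * θ) * ∑ n, q n * sin (((n : ℕ) + 1) * θ)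
      = q m * (π / 2) := by
  simp_rw [Finset.mul_sum, mul_left_comm _ (q _)]
  rw [intervalIntegral.integral_finsetSum fun n _ =>
    (by fun_prop : Continuous _).intervalIntegrable _ _]
  simp [intervalIntegral.integral_const_mul, integral_sin_mul_sin, Fin.val_inj]

lemma eq_zero_of_sum_sin_eqOn_zero {N : ℕ} {q : Fin N → ℝ}
    (hq : EqOn (fun θ => ∑ n, q n * sin (((n : ℕ) + 1) * θ)) 0 (Ioc 0 π)) : q = 0 := by
  funext m
  have h := integral_sin_mul_sum_sin q m
  rw [intervalIntegral.integral_congr_ae (g := fun _ => 0) (.of_forall fun θ hθ => by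
    rw [uIoc_of_le pi_pos.le] at hθ
    simp only [hq hθ, Pi.zero_apply, mul_zero])] at h
  simpa [pi_pos.ne'] using h.symm

lemma eqOn_zero_of_integral_eq_zero {f : ℝ → ℝ} {a b : ℝ} (hab : a ≤ b)
    (hf : ContinuousOn f (Icc a b)) (hf₀ : ∀ x ∈ Ioc a b, 0 ≤ f x) (h : ∫ x in a..b, f x = 0) :
    EqOn f 0 (Ioc a b) := by
  have hae := (intervalIntegral.integral_eq_zero_iff_of_le_of_nonneg_ae hab
    ((ae_restrict_iff' measurableSet_Ioc).2 (.of_forall hf₀))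
    (hf.intervalIntegrable_of_Icc hab)).1 h
  exact Measure.eqOn_Ioc_of_ae_eq volume hae (hf.mono Ioc_subset_Icc_self) continuousOn_const

lemma Matrix.mulVec_eq_integral_sum {m n : Type*} [Fintype n] {J : Matrix m n ℝ}
    {F : m → n → ℝ → ℝ} {a b : ℝ} (hF : ∀ i j, IntervalIntegrable (F i j) volume a b)
    (hJ : ∀ i j, J i j = ∫ x in a..b, F i j x) (q : n → ℝ) (i : m) :
    J.mulVec q i = ∫ x in a..b, ∑ j, F i j x * q j := by
  simp [Matrix.mulVec, dotProduct, hJ, ← intervalIntegral.integral_mul_const,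
    intervalIntegral.integral_finsetSum fun j _ => (hF i j).mul_const (q j)]

def cosSpan (n : ℕ) : Submodule ℝ (ℝ → ℝ) :=
  Submodule.span ℝ ((fun k : ℕ => fun θ => cos (k * θ)) '' Iic n)

lemma cos_mem_cosSpan {k n : ℕ} (h : k ≤ n) : (fun θ => cos (k * θ)) ∈ cosSpan n :=
  Submodule.subset_span ⟨k, h, rfl⟩

lemma cosSpan_mono : Monotone cosSpan := fun _ _ h =>
  Submodule.span_mono (image_mono (Iic_subset_Iic.2 h))

lemma continuous_of_mem_cosSpan {n : ℕ} {G : ℝ → ℝ} (hG : G ∈ cosSpan n) : Continuous G := by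
  induction hG using Submodule.span_induction with
  | mem _ h => obtain ⟨k, -, rfl⟩ := h; fun_prop
  | zero => exact continuous_const
  | add _ _ _ _ h₁ h₂ => exact h₁.add h₂
  | smul c _ _ h => exact h.const_smul c

-- `G θ = Uₙ(cos θ)`, built from `sin((n+3)θ) = sin((n+1)θ) + 2 cos((n+2)θ) sin θ`.
lemma exists_mem_cosSpan_sin_eq_mul_sin (n : ℕ) :
    ∃ G ∈ cosSpan n, ∀ θ, sin ((n + 1) * θ) = G θ * sin θ := by
  induction n using Nat.twoStepInduction with
  | zero => exact ⟨fun θ => cos ((0 : ℕ) * θ), cos_mem_cosSpan le_rfl, fun θ => by simp⟩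
  | one =>
    refine ⟨(2 : ℝ) • fun θ => cos ((1 : ℕ) * θ), Submodule.smul_mem _ _ (cos_mem_cosSpan le_rfl),
      fun θ => ?_⟩
    simp only [Pi.smul_apply, smul_eq_mul, Nat.cast_one, one_mul]
    rw [one_add_one_eq_two, sin_two_mul]
    ring
  | more n ih _ =>
    obtain ⟨G, hG, hsin⟩ := ih
    refine ⟨G + (2 : ℝ) • fun θ => cos (((n + 2 : ℕ) : ℝ) * θ),
      add_mem (cosSpan_mono (by omega) hG) (Submodule.smul_mem _ _ (cos_mem_cosSpan le_rfl)),
      fun θ => ?_⟩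
    have := two_mul_sin_mul_cos θ ((n + 2) * θ)
    simp only [Pi.add_apply, Pi.smul_apply, smul_eq_mul]
    rw [add_mul (G θ), ← hsin]
    push_cast
    rw [show θ - (n + 2) * θ = -((n + 1) * θ) by ring, sin_neg,
      show θ + (n + 2) * θ = (n + 2 + 1) * θ by ring] at this
    linarith

lemma exists_mem_cosSpan_sum_sin_eq_mul_sin {N : ℕ} (q : Fin (N + 1) → ℝ) :
    ∃ G ∈ cosSpan N, ∀ θ, ∑ n, q n * sin (((n : ℕ) + 1) * θ) = G θ * sin θ := by
  choose G hG hsin using fun n : Fin (N + 1) => exists_mem_cosSpan_sin_eq_mul_sin n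
  refine ⟨∑ n, q n • G n, Submodule.sum_mem _ fun n _ =>
    Submodule.smul_mem _ _ (cosSpan_mono (Nat.lt_succ_iff.1 n.2) (hG n)), fun θ => ?_⟩
  simp [hsin, Finset.sum_mul, mul_assoc]

lemma integral_mul_eq_zero_of_mem_cosSpan {d : ℕ} {f : ℝ → ℝ} {a b : ℝ}
    (hf : IntervalIntegrable f volume a b)
    (h : ∀ k ≤ d, ∫ x in a..b, cos (k * x) * f x = 0) {G : ℝ → ℝ} (hG : G ∈ cosSpan d) :
    ∫ x in a..b, G x * f x = 0 := by
  induction hG using Submodule.span_induction with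
  | mem _ hk => obtain ⟨k, hk, rfl⟩ := hk; exact h k hk
  | zero => simp
  | add G₁ G₂ h₁ h₂ ih₁ ih₂ =>
    simp only [Pi.add_apply, add_mul]
    rw [intervalIntegral.integral_add
      (hf.continuousOn_mul (continuous_of_mem_cosSpan h₁).continuousOn)
      (hf.continuousOn_mul (continuous_of_mem_cosSpan h₂).continuousOn), ih₁, ih₂, add_zero]
  | smul c G _ ih =>
    simp only [Pi.smul_apply, smul_eq_mul, mul_assoc, intervalIntegral.integral_const_mul, ih,
      mul_zero]

lemma eqOn_zero_of_integral_cos_mul_div_eq_zero {d : ℕ} {w g G : ℝ → ℝ}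
    (hw : ContinuousOn w (Icc 0 π)) (hwpos : ∀ θ ∈ Icc 0 π, 0 < w θ) (hG : G ∈ cosSpan d)
    (hgG : ∀ θ, g θ = G θ * sin θ)
    (h : ∀ k ≤ d, ∫ θ in (0 : ℝ)..π, cos (k * θ) * (g θ / w θ) = 0) :
    EqOn g 0 (Ioc 0 π) := by
  have hG_cont := continuous_of_mem_cosSpan hG
  have hgw : ContinuousOn (fun θ => g θ / w θ) (Icc 0 π) := by
    simp only [hgG]
    exact ((hG_cont.mul continuous_sin).continuousOn).div hw fun θ hθ => (hwpos θ hθ).ne'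
  have hGg_eq : ∀ θ, G θ * (g θ / w θ) = G θ ^ 2 * sin θ / w θ := fun θ => by
    rw [hgG]; ring
  have hGg_zero : EqOn (fun θ => G θ * (g θ / w θ)) 0 (Ioc 0 π) :=
    eqOn_zero_of_integral_eq_zero pi_pos.le (hG_cont.continuousOn.mul hgw)
      (fun θ hθ => by
        rw [hGg_eq]
        have := sin_nonneg_of_nonneg_of_le_pi hθ.1.le hθ.2
        have := hwpos θ (Ioc_subset_Icc_self hθ)
        positivity)
      (integral_mul_eq_zero_of_mem_cosSpan (hgw.intervalIntegrable_of_Icc pi_pos.le) h hG)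
  intro θ hθ
  have hsq : g θ ^ 2 = G θ * (g θ / w θ) * (sin θ * w θ) := by
    rw [hgG]; field_simp [(hwpos θ (Ioc_subset_Icc_self hθ)).ne']
  simpa [hGg_zero hθ] using hsq

/-- For a continuous, strictly positive weight `v` on `[−1,1]` and `d ≥ N`, the
`(d+1) × (N+1)` matrix with entries `J_{k,n} = ∫_0^π cos(kθ) sin((n+1)θ)/v(cos θ) dθ`
is injective. -/
theorem J_matrix_injective (v : ℝ → ℝ)
    (hv : ContinuousOn v (Set.Icc (-1 : ℝ) 1))
    (hvpos : ∀ x ∈ Set.Icc (-1 : ℝ) 1, 0 < v x)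
    (N d : ℕ) (hd : N ≤ d)
    (J : Matrix (Fin (d + 1)) (Fin (N + 1)) ℝ)
    (hJ : ∀ (k : Fin (d + 1)) (n : Fin (N + 1)),
      J k n = ∫ θ in (0:ℝ)..Real.pi,
        Real.cos ((k : ℕ) * θ) * Real.sin (((n : ℕ) + 1) * θ) / v (Real.cos θ)) :
    ∀ q : Fin (N + 1) → ℝ, J.mulVec q = 0 → q = 0 := by
  intro q hq
  set w : ℝ → ℝ := fun θ => v (cos θ)
  have hcos : ∀ θ, cos θ ∈ Icc (-1 : ℝ) 1 := fun θ => ⟨neg_one_le_cos θ, cos_le_one θ⟩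
  have hw : Continuous w := hv.comp_continuous continuous_cos hcos
  have hwpos : ∀ θ, 0 < w θ := fun θ => hvpos _ (hcos θ)
  set g : ℝ → ℝ := fun θ => ∑ n, q n * sin (((n : ℕ) + 1) * θ)
  obtain ⟨G, hG, hgG⟩ : ∃ G ∈ cosSpan N, ∀ θ, g θ = G θ * sin θ :=
    exists_mem_cosSpan_sum_sin_eq_mul_sin q
  have hJ_integrable : ∀ (k : Fin (d + 1)) (n : Fin (N + 1)), IntervalIntegrable
      (fun θ => cos ((k : ℕ) * θ) * sin (((n : ℕ) + 1) * θ) / w θ) volume 0 π := fun k n =>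
    ((by fun_prop : Continuous _).div hw fun θ => (hwpos θ).ne').intervalIntegrable _ _
  have hrows : ∀ k ≤ d, ∫ θ in (0 : ℝ)..π, cos (k * θ) * (g θ / w θ) = 0 := by
    intro k hk
    have hrow := congrFun hq ⟨k, by omega⟩
    rw [Matrix.mulVec_eq_integral_sum hJ_integrable hJ] at hrow
    refine (intervalIntegral.integral_congr fun θ _ => ?_).trans hrow
    simp only [g, Finset.mul_sum, Finset.sum_div]
    exact Finset.sum_congr rfl fun n _ => by ring
  exact eq_zero_of_sum_sin_eqOn_zero <| eqOn_zero_of_integral_cos_mul_div_eq_zero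
    hw.continuousOn (fun θ _ => hwpos θ) (cosSpan_mono hd hG) hgG hrows
end
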